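/- arXiv:math/0311071 — 4 statements merged into one kernel-verified Lean document; each statement's English description precedes it below -/
import Mathlib

section
/- Let k be a field and let G be a free group on two generators a and b. Then the right ideals (a-1)kG and (b-1)kG of the group ring kG intersect trivially: (a-1)kG ∩ (b-1)kG = 0. -/
/-!
If `α ∈ (c - 1)kG`, then the coefficients of `α` sum to zero over every coset `⟨c⟩g`, so no such
coset meets the support of `α` in exactly one point. Now take `g` of maximal length in the support
of `α`. Its reduced word cannot begin with both `a^{±1}` and `b^{±1}`; if it does not begin with
`c^{±1}`, then every `c^m g` with `m ≠ 0` is strictly longer than `g`, hence lies outside the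
support, and the coset `⟨c⟩g` meets the support only in `g`, which is impossible.
-/

open MonoidAlgebra

namespace FreeGroup

variable {ι : Type*}

theorem IsReduced.replicate_append {w : List (ι × Bool)} (hw : IsReduced w) {x : ι} (s : Bool)
    (n : ℕ) (hx : ∀ p ∈ w.head?, p.1 ≠ x) : IsReduced (List.replicate n (x, s) ++ w) := by
  refine List.isChain_append.mpr ⟨List.isChain_replicate_of_rel n fun _ => rfl, hw, ?_⟩
  intro p hp q hq hpq
  obtain rfl := List.eq_of_mem_replicate (List.mem_of_getLast? hp)
  exact absurd hpq.symm (hx q hq)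

variable [DecidableEq ι]

theorem toWord_of_zpow (x : ι) (m : ℤ) :
    (of x ^ m).toWord = List.replicate m.natAbs (x, decide (0 ≤ m)) := by
  obtain ⟨n, rfl | rfl⟩ := Int.eq_nat_or_neg m
  · simp
  · rw [zpow_neg, zpow_natCast, toWord_inv, toWord_of_pow]
    rcases n with _ | n
    · simp
    · simp [invRev, List.map_replicate]
      omega

theorem norm_of_zpow_mul {x : ι} (m : ℤ) {g : FreeGroup ι}
    (hg : ∀ p ∈ g.toWord.head?, p.1 ≠ x) : norm (of x ^ m * g) = m.natAbs + norm g := by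
  rw [norm, toWord_mul, toWord_of_zpow, (isReduced_toWord.replicate_append _ _ hg).reduce_eq,
    List.length_append, List.length_replicate, norm]

end FreeGroup

section

variable {R M N : Type*} [Ring R] [Monoid M] {c : M} {f : M → N}

theorem MonoidAlgebra.mapDomain_of_mul_of_forall_apply_mul_eq (hf : ∀ m, f (c * m) = f m)
    (x : MonoidAlgebra R M) : mapDomain f (of R M c * x) = mapDomain f x := by
  induction x using MonoidAlgebra.induction_linear with
  | zero => simp
  | add x y hx hy => rw [mul_add, mapDomain_add, mapDomain_add, hx, hy]
  | single m r => rw [of_apply, single_mul_single, one_mul, mapDomain_single, mapDomain_single, hf]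

theorem MonoidAlgebra.mapDomain_eq_zero_of_of_sub_one_dvd (hf : ∀ m, f (c * m) = f m)
    {α : MonoidAlgebra R M} (hα : of R M c - 1 ∣ α) : mapDomain f α = 0 := by
  obtain ⟨x, rfl⟩ := hα
  rw [sub_mul, one_mul, ← add_eq_right (b := mapDomain f x), ← mapDomain_add, sub_add_cancel]
  exact mapDomain_of_mul_of_forall_apply_mul_eq hf x

end

theorem MonoidAlgebra.exists_zpow_mul_mem_support_of_of_sub_one_dvd {R G : Type*} [Ring R]
    [Group G] {c g : G} {α : MonoidAlgebra R G} (hα : of R G c - 1 ∣ α)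
    (hg : g ∈ α.coeff.support) : ∃ m : ℤ, m ≠ 0 ∧ c ^ m * g ∈ α.coeff.support := by
  classical
  let π : G → MulAction.orbitRel.Quotient (Subgroup.zpowers c) G := Quotient.mk _
  have hπ : ∀ h, π h = π g ↔ ∃ m : ℤ, c ^ m * g = h := by
    intro h
    simp [π, Quotient.eq, MulAction.orbitRel_apply, MulAction.mem_orbit_iff, Subgroup.smul_def]
  have hsum : ∑ h ∈ α.coeff.support with π h = π g, α.coeff h = 0 := by
    rw [← Finsupp.mapDomain_apply_eq_sum, ← coeff_mapDomain,
      mapDomain_eq_zero_of_of_sub_one_dvd (fun h => ?_) hα, coeff_zero, Finsupp.coe_zero,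
      Pi.zero_apply]
    exact Quotient.sound ⟨⟨c, Subgroup.mem_zpowers c⟩, rfl⟩
  obtain ⟨h, hh, hne⟩ : ∃ h ∈ α.coeff.support.filter (π · = π g), h ≠ g := by
    by_contra! hcon
    rw [Finset.sum_eq_single_of_mem g (by simpa using hg)
      fun h hh hne => absurd (hcon h hh) hne] at hsum
    exact Finsupp.mem_support_iff.mp hg hsum
  rw [Finset.mem_filter, hπ] at hh
  obtain ⟨hh, m, rfl⟩ := hh
  exact ⟨m, by rintro rfl; simp at hne, hh⟩

theorem FreeGroup.eq_zero_of_of_sub_one_dvd_of_of_sub_one_dvd {R ι : Type*} [Ring R] {x y : ι}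
    (hxy : x ≠ y) {α : MonoidAlgebra R (FreeGroup ι)}
    (hx : MonoidAlgebra.of R _ (of x) - 1 ∣ α) (hy : MonoidAlgebra.of R _ (of y) - 1 ∣ α) : α = 0 := by
  classical
  by_contra hα
  obtain ⟨g, hg, hmax⟩ := Finset.exists_max_image α.coeff.support FreeGroup.norm
    (Finsupp.support_nonempty_iff.mpr (by simpa using hα))
  have lengthen : ∀ z : ι, MonoidAlgebra.of R _ (of z) - 1 ∣ α →
      (∀ p ∈ g.toWord.head?, p.1 ≠ z) → False := by
    intro z hz hgz
    obtain ⟨m, hm, hmg⟩ := exists_zpow_mul_mem_support_of_of_sub_one_dvd hz hg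
    have := hmax _ hmg
    rw [norm_of_zpow_mul m hgz] at this
    omega
  have hstart : (∀ p ∈ g.toWord.head?, p.1 ≠ x) ∨ ∀ p ∈ g.toWord.head?, p.1 ≠ y := by
    by_contra! h
    obtain ⟨⟨p, hp, rfl⟩, ⟨q, hq, rfl⟩⟩ := h
    exact hxy (by rw [Option.mem_unique hp hq])
  exact hstart.elim (lengthen x hx) (lengthen y hy)

/-- For a field `k` and the free group `G` on two generators `a`, `b`,
the right ideals `(a-1)kG` and `(b-1)kG` of the group ring `kG` intersect trivially. -/
theorem stmt_0 (k : Type*) [Field k]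
    (a b : FreeGroup Bool) (ha : a = FreeGroup.of true) (hb : b = FreeGroup.of false)
    (α : MonoidAlgebra k (FreeGroup Bool))
    (hαa : ∃ x, α = (MonoidAlgebra.of k (FreeGroup Bool) a - 1) * x)
    (hαb : ∃ y, α = (MonoidAlgebra.of k (FreeGroup Bool) b - 1) * y) :
    α = 0 := by
  subst ha hb
  exact FreeGroup.eq_zero_of_of_sub_one_dvd_of_of_sub_one_dvd (by decide) hαa hαb
end

section
/- Let k be a field and let G be a group containing a subgroup isomorphic to the free group F₂ on two generators. Then the group ring kG does not satisfy the right Ore condition with respect to its set of non-zerodivisors; that is, there exist a non-zerodivisor s and an element r of kG such that rs₁ ≠ sr₁ for all r₁ ∈ kG and all non-zerodivisors s₁. -/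
/-!
Let `x = f (of true)` and `y = f (of false)`. Since `x` has infinite order, `x - 1` is a
non-zerodivisor: a nonzero element fixed by left or right translation by `x` would have infinite
support. The Fox derivative `∂/∂x` of the free group, transported to the subgroup `f.range` and
extended coset by coset along a right transversal, gives a `k`-linear map `D` on `kG` with
`D ((x - 1) z) = z` and `D ((y - 1) z) = 0`. Applying `D` to `(y - 1) s₁ = (x - 1) r₁` gives
`r₁ = 0`, hence `(y - 1) s₁ = 0`, which is impossible for a non-zerodivisor `s₁`.
-/

open MonoidAlgebra nonZeroDivisors

theorem mem_nonZeroDivisors_iff_forall_ne_zero {M₀ : Type*} [MonoidWithZero M₀] {r : M₀} :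
    r ∈ M₀⁰ ↔ ∀ z, z ≠ 0 → r * z ≠ 0 ∧ z * r ≠ 0 :=
  mem_nonZeroDivisors_iff.trans
    ⟨fun h z hz => ⟨mt (h.1 z) hz, mt (h.2 z) hz⟩,
      fun h => ⟨fun z hrz => not_not.1 fun hz => (h z hz).1 hrz,
        fun z hzr => not_not.1 fun hz => (h z hz).2 hzr⟩⟩

theorem mul_ne_mul_of_separating_map {R : Type*} [Ring R] {r s : R} (hr : r ≠ 0) (D : R → R)
    (hDs : ∀ z, D (s * z) = z) (hDr : ∀ z, D (r * z) = 0) {r₁ s₁ : R} (hs₁ : s₁ ∈ R⁰) :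
    r * s₁ ≠ s * r₁ := by
  intro h
  have hr₁ : r₁ = 0 := by rw [← hDs r₁, ← h, hDr]
  rw [hr₁, mul_zero] at h
  exact hr ((mul_right_mem_nonZeroDivisors_eq_zero_iff hs₁).1 h)

theorem Finsupp.eq_zero_of_comp_eq_self {α M : Type*} [Zero M] (c : α →₀ M) {φ : α → α}
    (hφ : ∀ x, Function.Injective fun n => φ^[n] x) (hc : ⇑c ∘ φ = c) : c = 0 := by
  ext x
  by_contra hx
  have hc_iterate (n : ℕ) : c (φ^[n] x) = c x := congrFun (Function.iterate_invariant hc n) x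
  exact Set.infinite_of_injective_forall_mem (s := c.support) (hφ x)
    (fun n => by simpa [hc_iterate] using hx) c.support.finite_toSet

theorem MonoidAlgebra.single_sub_one_mem_nonZeroDivisors {k G : Type*} [Ring k] [Group G]
    {g : G} (hg : ¬IsOfFinOrder g) : single g (1 : k) - 1 ∈ k[G]⁰ := by
  have hinj : Function.Injective fun n : ℕ => g⁻¹ ^ n :=
    injective_pow_iff_not_isOfFinOrder.2 (by rwa [isOfFinOrder_inv_iff])
  refine ⟨fun z hz => ?_, fun z hz => ?_⟩
  · have hfix : single g 1 * z = z := by rwa [sub_mul, one_mul, sub_eq_zero] at hz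
    refine coeff_eq_zero.1 (z.coeff.eq_zero_of_comp_eq_self (φ := (g⁻¹ * ·))
      (fun x => by simp only [mul_left_iterate_apply]; exact (mul_left_injective x).comp hinj)
      (funext fun x => ?_))
    simpa using congrArg (·.coeff x) hfix
  · have hfix : z * single g 1 = z := by rwa [mul_sub, mul_one, sub_eq_zero] at hz
    refine coeff_eq_zero.1 (z.coeff.eq_zero_of_comp_eq_self (φ := (· * g⁻¹))
      (fun x => by simp only [mul_right_iterate_apply]; exact (mul_right_injective x).comp hinj)
      (funext fun x => ?_))
    simpa using congrArg (·.coeff x) hfix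

/-- `u ↦ !![χ u, 0; d u, 1]` is multiplicative exactly when `d` satisfies the cocycle identity,
so `d` is read off from the representation of the free group sending `of x` to
`!![χ (of x), 0; a x, 1]`. -/
theorem FreeGroup.exists_cocycle {A α : Type*} [Ring A] (χ : FreeGroup α →* A) (a : α → A) :
    ∃ d : FreeGroup α → A, (∀ u v, d (u * v) = d u * χ v + d v) ∧ ∀ x, d (of x) = a x := by
  let M (x : α) : (Matrix (Fin 2) (Fin 2) A)ˣ :=
    { val := !![χ (of x), 0; a x, 1]
      inv := !![χ (of x)⁻¹, 0; -(a x * χ (of x)⁻¹), 1]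
      val_inv := by simp [Matrix.one_fin_two, map_mul_eq_one χ (mul_inv_cancel (of x))]
      inv_val := by
        simp [Matrix.one_fin_two, mul_assoc, map_mul_eq_one χ (inv_mul_cancel (of x))] }
  let ρ := FreeGroup.lift M
  have shape (u) : ∃ c, (ρ u : Matrix (Fin 2) (Fin 2) A) = !![χ u, 0; c, 1] := by
    induction u using FreeGroup.induction_on with
    | C1 => exact ⟨0, by simp [Matrix.one_fin_two]⟩
    | of x => exact ⟨a x, by simp [ρ, M]⟩
    | inv_of x _ => exact ⟨-(a x * χ (of x)⁻¹), by simp [ρ, M]⟩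
    | mul u v hu hv =>
      obtain ⟨c, hc⟩ := hu
      obtain ⟨c', hc'⟩ := hv
      exact ⟨c * χ v + c', by simp [hc, hc']⟩
  choose d hd using shape
  refine ⟨d, fun u v => ?_, fun x => ?_⟩
  · simpa [hd u, hd v, Matrix.mul_fin_two] using (congrArg (· 1 0) (hd (u * v))).symm
  · simpa [ρ, M] using (congrArg (· 1 0) (hd (of x))).symm

/-- Writing `g = h * t` with `h ∈ H` and `t` in a right transversal, `D g = d h * t`. -/
theorem MonoidAlgebra.exists_linearMap_of_cocycle {k G : Type*} [CommRing k] [Group G]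
    (H : Subgroup G) (d : H → k[G]) (hd : ∀ a b, d (a * b) = d a * single (b : G) 1 + d b) :
    ∃ D : k[G] →ₗ[k] k[G], ∀ (h : H) z, D (single (h : G) 1 * z) = d h * z + D z := by
  obtain ⟨T, hT, -⟩ := H.exists_isComplement_right 1
  let D := (MonoidAlgebra.basis G k).constr k
    fun g => d (hT.equiv g).1 * single ((hT.equiv g).2 : G) 1
  have hD (g : G) : D (single g 1) = d (hT.equiv g).1 * single ((hT.equiv g).2 : G) 1 := by
    simpa using (MonoidAlgebra.basis G k).constr_basis k _ g
  refine ⟨D, fun h => LinearMap.congr_fun (?_ : D ∘ₗ LinearMap.mulLeft k (single (h : G) 1) =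
    LinearMap.mulLeft k (d h) + D)⟩
  refine (MonoidAlgebra.basis G k).ext fun g => ?_
  simp [hD, single_mul_single, hT.equiv_mul_left, hd, add_mul, mul_assoc,
    hT.equiv_fst_mul_equiv_snd]

theorem MonoidAlgebra.exists_linearMap_single_mul_eq {k G α : Type*} [CommRing k] [Group G]
    {f : FreeGroup α →* G} (hf : Function.Injective f) (a : α → k[G]) :
    ∃ D : k[G] →ₗ[k] k[G], ∀ x z, D (single (f (.of x)) 1 * z) = a x * z + D z := by
  obtain ⟨d, hd, hd_of⟩ := FreeGroup.exists_cocycle ((of k G).comp f) a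
  let e := MonoidHom.ofInjective hf
  obtain ⟨D, hD⟩ := exists_linearMap_of_cocycle f.range (d ∘ e.symm) fun u v => by
    simp [hd, e, MonoidHom.apply_ofInjective_symm]
  refine ⟨D, fun x z => ?_⟩
  simpa [hd_of, e, MonoidHom.ofInjective_apply] using hD (e (.of x)) z

/-- If a group `G` contains a subgroup isomorphic to the free group on two
generators, then for any field `k` the group ring `kG` fails the right Ore condition with
respect to its set of (two-sided) non-zerodivisors. -/
theorem stmt_1 (k : Type*) [Field k] (G : Type*) [Group G]
    (f : FreeGroup Bool →* G) (hf : Function.Injective f) :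
    ∃ s r : MonoidAlgebra k G,
      (∀ z : MonoidAlgebra k G, z ≠ 0 → s * z ≠ 0 ∧ z * s ≠ 0) ∧
      ∀ r₁ s₁ : MonoidAlgebra k G,
        (∀ z : MonoidAlgebra k G, z ≠ 0 → s₁ * z ≠ 0 ∧ z * s₁ ≠ 0) →
        r * s₁ ≠ s * r₁ := by
  have hfree (x : Bool) : ¬IsOfFinOrder (f (.of x)) := by
    rw [hf.isOfFinOrder_iff]
    exact not_isOfFinOrder_of_isMulTorsionFree (FreeGroup.of_ne_one x)
  have hs := single_sub_one_mem_nonZeroDivisors (k := k) (hfree true)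
  have hr := single_sub_one_mem_nonZeroDivisors (k := k) (hfree false)
  obtain ⟨D, hD⟩ := exists_linearMap_single_mul_eq (k := k) hf fun x => if x then 1 else 0
  refine ⟨_, _, mem_nonZeroDivisors_iff_forall_ne_zero.1 hs, fun r₁ s₁ hs₁ =>
    mul_ne_mul_of_separating_map (nonZeroDivisors.ne_zero hr) D (fun z => ?_) (fun z => ?_)
      (mem_nonZeroDivisors_iff_forall_ne_zero.2 hs₁)⟩
  · simp [sub_mul, hD]
  · simp [sub_mul, hD]
end

section
/- Let R be a subring of a ring T (with the same identity). Then the rational closure operation is idempotent: the rational closure of the rational closure of R in T equals the rational closure of R in T. -/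
/-- The rational closure of a subset `R` of a ring `T`: all entries of inverses of square
matrices over `R` that are invertible over `T`. -/
def ratClosure {T : Type*} [Ring T] (R : Set T) : Set T :=
  {x | ∃ (n : ℕ) (A B : Matrix (Fin n) (Fin n) T),
    (∀ i j, A i j ∈ R) ∧ A * B = 1 ∧ B * A = 1 ∧ ∃ i j, x = B i j}

open Matrix

/-- Key block-matrix computation (Schur complement): the block matrix `[[D, Q], [-P, 0]]`
has an explicit inverse whose bottom-right block is `C`. -/
lemma ratClosure.key {T : Type*} [Ring T] {ι κ : Type} [Fintype ι] [Fintype κ]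
    [DecidableEq ι] [DecidableEq κ]
    (A C : Matrix κ κ T) (D Di : Matrix ι ι T) (P : Matrix κ ι T) (Q : Matrix ι κ T)
    (hAC : A * C = 1) (hCA : C * A = 1) (hDDi : D * Di = 1) (hDiD : Di * D = 1)
    (hPDQ : P * (Di * Q) = A) :
    fromBlocks D Q (-P) 0 *
      fromBlocks (Di - Di * (Q * (C * (P * Di)))) (-(Di * (Q * C))) (C * (P * Di)) C = 1 ∧
    fromBlocks (Di - Di * (Q * (C * (P * Di)))) (-(Di * (Q * C))) (C * (P * Di)) C *
      fromBlocks D Q (-P) 0 = 1 := by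
  have e1 : ∀ (m : Type) (X : Matrix ι m T), D * (Di * X) = X := by
    intro m X; rw [← Matrix.mul_assoc, hDDi, Matrix.one_mul]
  have e2 : ∀ (m : Type) (X : Matrix ι m T), Di * (D * X) = X := by
    intro m X; rw [← Matrix.mul_assoc, hDiD, Matrix.one_mul]
  have e3 : ∀ (m : Type) (X : Matrix κ m T), A * (C * X) = X := by
    intro m X; rw [← Matrix.mul_assoc, hAC, Matrix.one_mul]
  have e4 : ∀ (m : Type) (X : Matrix κ m T), C * (A * X) = X := by
    intro m X; rw [← Matrix.mul_assoc, hCA, Matrix.one_mul]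
  have e5 : ∀ (m : Type) (X : Matrix κ m T), P * (Di * (Q * X)) = A * X := by
    intro m X
    rw [show Di * (Q * X) = Di * Q * X from (Matrix.mul_assoc Di Q X).symm,
      ← Matrix.mul_assoc, hPDQ]
  constructor <;>
  · rw [fromBlocks_multiply, ← fromBlocks_one]
    simp only [Matrix.mul_assoc, Matrix.mul_sub, Matrix.sub_mul, Matrix.mul_neg,
      Matrix.neg_mul, neg_neg, Matrix.zero_mul, Matrix.mul_zero, Matrix.mul_one,
      Matrix.one_mul, add_zero, zero_add, e1, e2, e3, e4, e5, hDDi, hDiD, hAC, hCA, hPDQ,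
      sub_add_cancel, sub_self, neg_add_cancel, add_neg_cancel, neg_zero, neg_sub, sub_neg_eq_add]

/-- The picking identity: `P * (Di * Q) = A`, where `Di` is the block diagonal of the
inverse witnesses and `P`, `Q` are 0-1 picking matrices. -/
lemma ratClosure.pick {T : Type*} [Ring T] (n : ℕ) (k : Fin n × Fin n → ℕ)
    (Cm : ∀ p, Matrix (Fin (k p)) (Fin (k p)) T)
    (ip jp : ∀ p, Fin (k p)) (A : Matrix (Fin n) (Fin n) T)
    (hval : ∀ p, A p.1 p.2 = Cm p (ip p) (jp p)) :
    (Matrix.of (fun (i : Fin n) (s : (p : Fin n × Fin n) × Fin (k p)) =>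
        if s.1.1 = i ∧ s.2 = ip s.1 then (1:T) else 0)) *
      (Matrix.blockDiagonal' Cm *
       Matrix.of (fun (s : (p : Fin n × Fin n) × Fin (k p)) (j : Fin n) =>
        if s.1.2 = j ∧ s.2 = jp s.1 then (1:T) else 0)) = A := by
  ext i j
  simp only [Matrix.mul_apply, Matrix.of_apply, Matrix.blockDiagonal'_apply]
  rw [← Finset.univ_sigma_univ]
  simp only [Finset.sum_sigma]
  simp only [ite_mul, mul_ite, one_mul, zero_mul, mul_one, mul_zero, ite_and]
  rw [Finset.sum_eq_single (i, j)]
  · simp only [if_pos rfl]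
    rw [Finset.sum_eq_single (ip (i, j))]
    · simp only [if_pos rfl]
      rw [Finset.sum_eq_single (i, j)]
      · rw [Finset.sum_eq_single (jp (i, j))]
        · simp [hval (i, j)]
        · intro b _ hb
          simp [hb]
        · simp
      · intro b _ hb
        apply Finset.sum_eq_zero
        intro c _
        split_ifs with h2 h3 h4
        · exact absurd h4.symm hb
        · rfl
        · rfl
        · rfl
      · simp
    · intro b _ hb
      simp [hb]
    · simp
  · intro b _ hb
    split_ifs with h1
    · apply Finset.sum_eq_zero
      intro c _
      split_ifs with h2
      · apply Finset.sum_eq_zero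
        intro p' _
        apply Finset.sum_eq_zero
        intro a' _
        split_ifs with h3 h4 h5
        · subst h5
          exact absurd (Prod.ext h1 h3) hb
        · rfl
        · rfl
        · rfl
      · rfl
    · apply Finset.sum_eq_zero
      intro c _
      simp [h1]
  · simp

lemma subset_ratClosure {T : Type*} [Ring T] (R : Subring T) :
    (R : Set T) ⊆ ratClosure (R : Set T) := by
  intro y hy
  refine ⟨2, !![1, -y; 0, 1], !![1, y; 0, 1], ?_, ?_, ?_, 0, 1, by simp⟩
  · intro i j
    fin_cases i <;> fin_cases j <;>
      simp [R.one_mem, R.zero_mem, R.neg_mem hy, hy]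
  · rw [Matrix.mul_fin_two]
    simp [Matrix.one_fin_two]
  · rw [Matrix.mul_fin_two]
    simp [Matrix.one_fin_two]

/-- Taking the rational closure is an idempotent operation. -/
theorem stmt_3 {T : Type*} [Ring T] (R : Subring T) :
    ratClosure (ratClosure (R : Set T)) = ratClosure (R : Set T) := by
  apply Set.eq_of_subset_of_subset
  · rintro x ⟨n, A, C, hA, hAC, hCA, i, j, rfl⟩
    classical
    -- choose witnesses for each entry of A
    have h : ∀ p : Fin n × Fin n, ∃ (m : ℕ) (B C' : Matrix (Fin m) (Fin m) T),
        (∀ i j, B i j ∈ (R : Set T)) ∧ B * C' = 1 ∧ C' * B = 1 ∧ ∃ i j, A p.1 p.2 = C' i j :=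
      fun p => hA p.1 p.2
    choose k B Cm hB hBC hCB ip jp hval using h
    set D : Matrix ((p : Fin n × Fin n) × Fin (k p)) ((p : Fin n × Fin n) × Fin (k p)) T :=
      Matrix.blockDiagonal' B with hD
    set Di : Matrix ((p : Fin n × Fin n) × Fin (k p)) ((p : Fin n × Fin n) × Fin (k p)) T :=
      Matrix.blockDiagonal' Cm with hDi
    set P : Matrix (Fin n) ((p : Fin n × Fin n) × Fin (k p)) T :=
      Matrix.of (fun i s => if s.1.1 = i ∧ s.2 = ip s.1 then (1:T) else 0) with hP
    set Q : Matrix ((p : Fin n × Fin n) × Fin (k p)) (Fin n) T :=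
      Matrix.of (fun s j => if s.1.2 = j ∧ s.2 = jp s.1 then (1:T) else 0) with hQ
    have hDDi : D * Di = 1 := by
      rw [hD, hDi, ← Matrix.blockDiagonal'_mul]
      have : (fun p => B p * Cm p) = fun _ => 1 := funext hBC
      rw [this]
      exact Matrix.blockDiagonal'_one
    have hDiD : Di * D = 1 := by
      rw [hD, hDi, ← Matrix.blockDiagonal'_mul]
      have : (fun p => Cm p * B p) = fun _ => 1 := funext hCB
      rw [this]
      exact Matrix.blockDiagonal'_one
    have hPDQ : P * (Di * Q) = A := ratClosure.pick n k Cm ip jp A hval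
    obtain ⟨hMN, hNM⟩ := ratClosure.key A C D Di P Q hAC hCA hDDi hDiD hPDQ
    set M := fromBlocks D Q (-P) 0 with hM
    set N := fromBlocks (Di - Di * (Q * (C * (P * Di)))) (-(Di * (Q * C))) (C * (P * Di)) C
      with hN
    -- reindex to a Fin type
    set e : (((p : Fin n × Fin n) × Fin (k p)) ⊕ Fin n) ≃
        Fin (Fintype.card (((p : Fin n × Fin n) × Fin (k p)) ⊕ Fin n)) :=
      Fintype.equivFin _ with he
    refine ⟨_, M.submatrix e.symm e.symm, N.submatrix e.symm e.symm, ?_, ?_, ?_,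
      e (Sum.inr i), e (Sum.inr j), ?_⟩
    · intro a b
      rcases ha : e.symm a with s | s <;> rcases hb : e.symm b with t | t <;>
        simp only [Matrix.submatrix_apply, ha, hb, hM, Matrix.fromBlocks_apply₁₁,
          Matrix.fromBlocks_apply₁₂, Matrix.fromBlocks_apply₂₁, Matrix.fromBlocks_apply₂₂]
      · rw [hD, Matrix.blockDiagonal'_apply]
        split
        · exact hB _ _ _
        · exact R.zero_mem
      · rw [hQ, Matrix.of_apply]
        split
        · exact R.one_mem
        · exact R.zero_mem
      · rw [Matrix.neg_apply, hP, Matrix.of_apply]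
        split
        · exact R.neg_mem R.one_mem
        · rw [neg_zero]; exact R.zero_mem
      · exact R.zero_mem
    · rw [Matrix.submatrix_mul_equiv, hMN, Matrix.submatrix_one_equiv]
    · rw [Matrix.submatrix_mul_equiv, hNM, Matrix.submatrix_one_equiv]
    · simp [hN]
  · intro x hx
    obtain ⟨n, A, B, hA, h1, h2, i, j, hx⟩ := hx
    exact ⟨n, A, B, fun i j => subset_ratClosure R (hA i j), h1, h2, i, j, hx⟩
end

section
/- Let G be a group with a subgroup H, and suppose α ∈ (x-1)·kH ∩ (y-1)·kH = 0 for all α, where x, y ∈ H. Then also (x-1)·kG ∩ (y-1)·kG = 0, where kG is the group ring of G over a field k. -/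
/-!
Reading off the coefficients of `f ∈ k[G]` along a right coset `H g` gives a map
`k[G] → k[H]` that commutes with left multiplication by `H` (this is `k[G]` being free as a left
`k[H]`-module on a right transversal). It therefore carries `(x - 1) k[G] ∩ (y - 1) k[G]` into
`(x - 1) k[H] ∩ (y - 1) k[H] = 0`, and an element all of whose coset restrictions vanish is zero.
-/

namespace MonoidAlgebra

variable {k G : Type*} [Group G] (H : Subgroup G)

noncomputable def restrictCoset [Semiring k] (g : G) : k[G] →+ k[H] :=
  coeffAddEquiv.symm.toAddMonoidHom.comp <|
    (Finsupp.comapDomain.addMonoidHom (f := fun h : H ↦ (h : G) * g)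
      fun _ _ h ↦ Subtype.ext (mul_right_cancel h)).comp
      (coeffAddEquiv (M := G) (R := k)).toAddMonoidHom

@[simp]
lemma coeff_restrictCoset [Semiring k] (g : G) (f : k[G]) (h : H) :
    (restrictCoset H g f).coeff h = f.coeff (h * g) := rfl

lemma restrictCoset_of_mul [Semiring k] (g : G) (z : H) (f : k[G]) :
    restrictCoset H g (of k G z * f) = of k H z * restrictCoset H g f := by
  ext h
  simp [mul_assoc]

lemma restrictCoset_of_sub_one_mul [Ring k] (g : G) (z : H) (f : k[G]) :
    restrictCoset H g ((of k G z - 1) * f) = (of k H z - 1) * restrictCoset H g f := by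
  simp only [sub_mul, one_mul, map_sub, restrictCoset_of_mul]

end MonoidAlgebra

/-- Let `k` be a field, `G` a group with subgroup `H`, and `x, y ∈ H`.  If the
right ideals `(x-1)kH` and `(y-1)kH` of `kH` intersect trivially, then the right ideals
`(x-1)kG` and `(y-1)kG` of `kG` intersect trivially. -/
theorem stmt_18 (k : Type*) [Field k] (G : Type*) [Group G] (H : Subgroup G) (x y : H)
    (hH : ∀ α : MonoidAlgebra k H,
      (∃ β, α = (MonoidAlgebra.of k H x - 1) * β) →
      (∃ γ, α = (MonoidAlgebra.of k H y - 1) * γ) → α = 0) :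
    ∀ α : MonoidAlgebra k G,
      (∃ β, α = (MonoidAlgebra.of k G (x : G) - 1) * β) →
      (∃ γ, α = (MonoidAlgebra.of k G (y : G) - 1) * γ) → α = 0 := by
  rintro α ⟨β, rfl⟩ ⟨γ, hγ⟩
  ext g
  have restrict_eq_zero :=
    hH (MonoidAlgebra.restrictCoset H g ((MonoidAlgebra.of k G x - 1) * β))
      ⟨_, MonoidAlgebra.restrictCoset_of_sub_one_mul H g x β⟩
      ⟨_, by rw [hγ, MonoidAlgebra.restrictCoset_of_sub_one_mul]⟩
  simpa using congr(($restrict_eq_zero).coeff 1)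
end
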